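/- arXiv:1909.09146 — 2 statements merged into one kernel-verified Lean document; each statement's English description precedes it below -/
import Mathlib

section
/- Let 0 < gamma < 1, lambda > 0, and let A_1, ..., A_t be vectors in R^d. Define V_t = sum_{s=1}^t gamma^{-s} A_s A_s^T + lambda gamma^{-t} I_d and tilde_V_t = sum_{s=1}^t gamma^{-2s} A_s A_s^T + lambda gamma^{-2t} I_d. Then for all t, V_t^{-1} tilde_V_t V_t^{-1} <= gamma^{-t} V_t^{-1} in the Loewner (positive semidefinite) order. -/
set_option autoImplicit false

open Matrix Finset

lemma psd_vecMulVec {d : ℕ} (v : Fin d → ℝ) : (vecMulVec v v).PosSemidef := by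
  rw [posSemidef_iff_dotProduct_mulVec]
  constructor
  · ext i j
    simp [vecMulVec, conjTranspose_apply, mul_comm]
  · intro x
    have h : star x ⬝ᵥ (vecMulVec v v *ᵥ x) = (v ⬝ᵥ x) ^ 2 := by
      simp only [star_trivial, dotProduct, mulVec, vecMulVec_apply, sq]
      simp only [Finset.mul_sum, Finset.sum_mul]
      rw [Finset.sum_comm]
      exact Finset.sum_congr rfl fun i _ => Finset.sum_congr rfl fun j _ => by ring
    rw [h]
    positivity

lemma psd_smul {d : ℕ} {M : Matrix (Fin d) (Fin d) ℝ} (hM : M.PosSemidef) {c : ℝ}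
    (hc : 0 ≤ c) : (c • M).PosSemidef := by
  rw [posSemidef_iff_dotProduct_mulVec]
  constructor
  · show (c • M)ᴴ = c • M
    rw [Matrix.conjTranspose_smul, star_trivial, hM.1.eq]
  · intro x
    rw [smul_mulVec, dotProduct_smul, smul_eq_mul]
    exact mul_nonneg hc (hM.dotProduct_mulVec_nonneg x)

lemma psd_sum {d : ℕ} {ι : Type*} (s : Finset ι) (f : ι → Matrix (Fin d) (Fin d) ℝ)
    (h : ∀ i ∈ s, (f i).PosSemidef) : (∑ i ∈ s, f i).PosSemidef := by
  classical
  induction s using Finset.induction_on with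
  | empty => simpa using Matrix.PosSemidef.zero
  | @insert a s hx ih =>
    rw [Finset.sum_insert hx]
    exact (h _ (Finset.mem_insert_self _ _)).add
      (ih fun i hi => h i (Finset.mem_insert_of_mem hi))

/-- Loewner-order comparison `V_t⁻¹ Ṽ_t V_t⁻¹ ≤ γ^{-t} V_t⁻¹`. -/
theorem inv_tilde_inv_le_discounted_inv {d : ℕ} (t : ℕ) (A : ℕ → (Fin d → ℝ))
    (γ lam : ℝ) (hγ0 : 0 < γ) (hγ1 : γ < 1) (hlam : 0 < lam)
    (V tV : Matrix (Fin d) (Fin d) ℝ)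
    (hV : V = ∑ s ∈ Icc 1 t, (γ ^ s)⁻¹ • vecMulVec (A s) (A s)
        + (lam * (γ ^ t)⁻¹) • (1 : Matrix (Fin d) (Fin d) ℝ))
    (htV : tV = ∑ s ∈ Icc 1 t, (γ ^ (2 * s))⁻¹ • vecMulVec (A s) (A s)
        + (lam * (γ ^ (2 * t))⁻¹) • (1 : Matrix (Fin d) (Fin d) ℝ)) :
    ((γ ^ t)⁻¹ • V⁻¹ - V⁻¹ * tV * V⁻¹).PosSemidef := by
  have hγt : (0:ℝ) < γ ^ t := pow_pos hγ0 t
  -- V is positive definite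
  have hVpd : V.PosDef := by
    rw [hV]
    refine Matrix.PosDef.posSemidef_add ?_ ?_
    · refine psd_sum _ _ fun s _ => ?_
      exact psd_smul (psd_vecMulVec (A s)) (by positivity)
    · have h1 : ((lam * (γ ^ t)⁻¹) • (1 : Matrix (Fin d) (Fin d) ℝ))
          = Matrix.diagonal (fun _ => lam * (γ ^ t)⁻¹) := by
        ext i j
        by_cases h : i = j <;> simp [Matrix.one_apply, Matrix.diagonal, h]
      rw [h1]
      exact Matrix.PosDef.diagonal fun i => by positivity
  have hVinv : IsUnit V.det := hVpd.det_pos.ne'.isUnit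
  have hVVi : V * V⁻¹ = 1 := Matrix.mul_nonsing_inv V hVinv
  have hViV : V⁻¹ * V = 1 := Matrix.nonsing_inv_mul V hVinv
  -- The difference matrix D = γ^{-t} • V - tV is PSD
  have hD : ((γ ^ t)⁻¹ • V - tV).PosSemidef := by
    have hEq : (γ ^ t)⁻¹ • V - tV
        = ∑ s ∈ Icc 1 t, ((γ ^ t * γ ^ s)⁻¹ - (γ ^ (2 * s))⁻¹) • vecMulVec (A s) (A s) := by
      rw [hV, htV]
      rw [smul_add, Finset.smul_sum]
      have hlamterm : (γ ^ t)⁻¹ • ((lam * (γ ^ t)⁻¹) • (1 : Matrix (Fin d) (Fin d) ℝ))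
          = (lam * (γ ^ (2 * t))⁻¹) • (1 : Matrix (Fin d) (Fin d) ℝ) := by
        rw [smul_smul]
        congr 1
        rw [two_mul, pow_add, mul_inv]
        ring
      rw [hlamterm]
      rw [add_sub_add_right_eq_sub, ← Finset.sum_sub_distrib]
      refine Finset.sum_congr rfl fun s _ => ?_
      rw [smul_smul, ← sub_smul, ← mul_inv]
    rw [hEq]
    refine psd_sum _ _ fun s hs => ?_
    apply psd_smul (psd_vecMulVec (A s))
    have hs1 := (Finset.mem_Icc.mp hs).2
    have h1 : γ ^ t * γ ^ s ≤ γ ^ (2 * s) := by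
      rw [two_mul, pow_add]
      exact mul_le_mul_of_nonneg_right
        (pow_le_pow_of_le_one hγ0.le hγ1.le hs1) (pow_pos hγ0 s).le
    have h2 : (0:ℝ) < γ ^ t * γ ^ s := by positivity
    have := inv_anti₀ h2 h1
    linarith
  -- V⁻¹ is symmetric
  have hVsym : V⁻¹.IsHermitian := hVpd.1.inv
  -- Rewrite the goal as V⁻¹ * D * (V⁻¹)ᴴ
  have key : (γ ^ t)⁻¹ • V⁻¹ - V⁻¹ * tV * V⁻¹
      = V⁻¹ * ((γ ^ t)⁻¹ • V - tV) * (V⁻¹)ᴴ := by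
    rw [hVsym.eq]
    rw [Matrix.mul_sub, Matrix.sub_mul]
    congr 1
    rw [Matrix.mul_smul, Matrix.smul_mul, hViV, Matrix.one_mul]
  rw [key]
  exact hD.mul_mul_conjTranspose_same V⁻¹
end

section
/- Let l >= 1 be an integer, lambda > 0, and let A_1, ..., A_T be vectors in R^d with ||A_t||_2 <= L for all t. Define the sliding-window design matrices V_t = sum_{s=max(1, t-l+1)}^{t} A_s A_s^T + lambda I_d (with V_0 = lambda I_d). Then sum_{t=1}^T min(1, ||A_t||^2_{V_{t-1}^{-1}}) <= 2 d * ceil(T / l) * log(1 + l L^2 / (lambda d)). -/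
set_option autoImplicit false

open Matrix Finset

/-- The norm `‖x‖_M = sqrt (xᵀ M x)` associated with a (positive definite) matrix `M`. -/
noncomputable def matNorm {d : ℕ} (M : Matrix (Fin d) (Fin d) ℝ) (x : Fin d → ℝ) : ℝ :=
  Real.sqrt (x ⬝ᵥ M *ᵥ x)

section Helpers
variable {d : ℕ}

lemma min_le_two_log {x : ℝ} (hx : 0 ≤ x) : min 1 x ≤ 2 * Real.log (1 + x) := by
  have hpos : (0:ℝ) < 1 + x := by linarith
  rcases le_total x 1 with h | h
  · rw [min_eq_right h]
    have h1 : Real.log ((1+x)⁻¹) ≤ (1+x)⁻¹ - 1 :=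
      Real.log_le_sub_one_of_pos (by positivity)
    rw [Real.log_inv] at h1
    have h2 : x / (1 + x) ≤ Real.log (1 + x) := by
      have : (1+x)⁻¹ - 1 = -(x/(1+x)) := by field_simp; ring
      rw [this] at h1; linarith [neg_le_neg h1]
    have h3 : x / 2 ≤ x / (1 + x) :=
      div_le_div_of_nonneg_left hx hpos (by linarith)
    linarith
  · rw [min_eq_left h]
    have h2 : Real.log 2 ≤ Real.log (1 + x) := Real.log_le_log (by norm_num) (by linarith)
    linarith [Real.log_two_gt_d9]

lemma posDef_smul_one {lam : ℝ} (hlam : 0 < lam) :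
    (lam • (1 : Matrix (Fin d) (Fin d) ℝ)).PosDef := by
  have h : lam • (1 : Matrix (Fin d) (Fin d) ℝ) = diagonal (fun _ => lam) := by
    ext i j; by_cases h : i = j <;> simp [Matrix.smul_apply, Matrix.one_apply, h]
  rw [h]
  exact Matrix.PosDef.diagonal (fun _ => hlam)

lemma dot_symm {M : Matrix (Fin d) (Fin d) ℝ} (hM : M.IsHermitian) (x y : Fin d → ℝ) :
    x ⬝ᵥ M *ᵥ y = y ⬝ᵥ M *ᵥ x := by
  rw [dotProduct_mulVec, ← mulVec_transpose]
  have h : Mᵀ = M := by rw [← Matrix.conjTranspose_eq_transpose_of_trivial]; exact hM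
  rw [h, dotProduct_comm]

lemma quad_inv_mono {M N : Matrix (Fin d) (Fin d) ℝ} (hM : M.PosDef) (hN : N.PosDef)
    (h : ∀ y, y ⬝ᵥ M *ᵥ y ≤ y ⬝ᵥ N *ᵥ y) (x : Fin d → ℝ) :
    x ⬝ᵥ N⁻¹ *ᵥ x ≤ x ⬝ᵥ M⁻¹ *ᵥ x := by
  set y := N⁻¹ *ᵥ x with hy
  set w := M⁻¹ *ᵥ x with hw
  have hNy : N *ᵥ y = x := by
    rw [hy, mulVec_mulVec, Matrix.mul_nonsing_inv _ hN.det_pos.ne'.isUnit, one_mulVec]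
  have hMw : M *ᵥ w = x := by
    rw [hw, mulVec_mulVec, Matrix.mul_nonsing_inv _ hM.det_pos.ne'.isUnit, one_mulVec]
  have key : 0 ≤ (y - w) ⬝ᵥ M *ᵥ (y - w) := by
    have := hM.posSemidef.dotProduct_mulVec_nonneg (y - w); rwa [star_trivial] at this
  have h1 : y ⬝ᵥ M *ᵥ w = x ⬝ᵥ y := by rw [hMw, dotProduct_comm]
  have h2 : w ⬝ᵥ M *ᵥ y = x ⬝ᵥ y := by rw [dot_symm hM.isHermitian, h1]
  have h3 : w ⬝ᵥ M *ᵥ w = x ⬝ᵥ w := by rw [hMw, dotProduct_comm]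
  have expand : (y - w) ⬝ᵥ M *ᵥ (y - w)
      = y ⬝ᵥ M *ᵥ y - 2 * (x ⬝ᵥ y) + x ⬝ᵥ w := by
    rw [Matrix.mulVec_sub, dotProduct_sub, sub_dotProduct, sub_dotProduct]
    rw [h1, h2, h3]; ring
  have h4 : y ⬝ᵥ N *ᵥ y = x ⬝ᵥ y := by rw [hNy, dotProduct_comm]
  have h5 := h y
  have : x ⬝ᵥ y ≤ x ⬝ᵥ w := by linarith
  simpa [hy, hw] using this

lemma det_add_vecMulVec {M : Matrix (Fin d) (Fin d) ℝ} (hM : M.PosDef) (a : Fin d → ℝ) :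
    (M + vecMulVec a a).det = M.det * (1 + a ⬝ᵥ M⁻¹ *ᵥ a) := by
  rw [vecMulVec_eq Unit, Matrix.det_add_replicateCol_mul_replicateRow hM.det_pos.ne'.isUnit]
  congr 1
  rw [det_unique]
  simp [Matrix.mul_apply, Matrix.one_apply, dotProduct, mulVec, Finset.sum_mul, Finset.mul_sum]
  ring_nf
  rw [Finset.sum_comm]

lemma trace_eq_sum_eigenvalues {M : Matrix (Fin d) (Fin d) ℝ} (hM : M.IsHermitian) :
    M.trace = ∑ i, hM.eigenvalues i := by
  nth_rewrite 1 [hM.spectral_theorem]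
  rw [Unitary.conjStarAlgAut_apply, Matrix.trace_mul_cycle]
  rw [Matrix.mem_unitaryGroup_iff'.mp (hM.eigenvectorUnitary).2, one_mul, Matrix.trace_diagonal]
  simp

lemma det_le_trace_div_pow {M : Matrix (Fin d) (Fin d) ℝ} (hd : 0 < d) (hM : M.PosDef) :
    M.det ≤ (M.trace / d) ^ d := by
  rw [hM.isHermitian.det_eq_prod_eigenvalues, trace_eq_sum_eigenvalues hM.isHermitian]
  have hnn : ∀ i ∈ univ, (0:ℝ) ≤ hM.isHermitian.eigenvalues i := fun i _ => (hM.eigenvalues_pos i).le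
  have amgm := Real.geom_mean_le_arith_mean_weighted univ (fun _ => (d:ℝ)⁻¹)
      hM.isHermitian.eigenvalues (fun i _ => by positivity)
      (by simp [Finset.card_univ]; field_simp) hnn
  have h1 : ∏ i, (hM.isHermitian.eigenvalues i) ^ ((d:ℝ)⁻¹)
      = (∏ i, hM.isHermitian.eigenvalues i) ^ ((d:ℝ)⁻¹) := by
    rw [← Real.finset_prod_rpow _ _ hnn]
  have h2 : ∑ i, (d:ℝ)⁻¹ * hM.isHermitian.eigenvalues i
      = (∑ i, hM.isHermitian.eigenvalues i) / d := by
    rw [← Finset.mul_sum]; ring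
  rw [h1, h2] at amgm
  have hprod : (0:ℝ) ≤ ∏ i, hM.isHermitian.eigenvalues i :=
    Finset.prod_nonneg hnn
  calc (∏ i, (hM.isHermitian.eigenvalues i : ℝ))
      = ((∏ i, hM.isHermitian.eigenvalues i) ^ ((d:ℝ)⁻¹)) ^ d := by
        rw [← Real.rpow_natCast _ d, ← Real.rpow_mul hprod]
        field_simp
        simp
    _ ≤ ((∑ i, hM.isHermitian.eigenvalues i) / d) ^ d := by
        apply pow_le_pow_left₀ (Real.rpow_nonneg hprod _) amgm

lemma quad_vecMulVec (a x : Fin d → ℝ) : x ⬝ᵥ (vecMulVec a a) *ᵥ x = (a ⬝ᵥ x)^2 := by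
  have h : vecMulVec a a *ᵥ x = (a ⬝ᵥ x) • a := by
    ext i
    simp [mulVec, vecMulVec_apply, dotProduct, Finset.mul_sum, mul_comm, mul_left_comm, mul_assoc]
  rw [h, dotProduct_smul, smul_eq_mul, dotProduct_comm]
  ring

lemma sum_mat_mulVec (S : Finset ℕ) (M : ℕ → Matrix (Fin d) (Fin d) ℝ) (y : Fin d → ℝ) :
    (∑ s ∈ S, M s) *ᵥ y = ∑ s ∈ S, (M s) *ᵥ y := by
  ext i
  simp only [mulVec, dotProduct, Finset.sum_apply, Matrix.sum_apply, Finset.sum_mul]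
  rw [Finset.sum_comm]

lemma dot_sum_right (S : Finset ℕ) (y : Fin d → ℝ) (v : ℕ → Fin d → ℝ) :
    y ⬝ᵥ ∑ s ∈ S, v s = ∑ s ∈ S, y ⬝ᵥ v s := by
  simp only [dotProduct, Finset.sum_apply, Finset.mul_sum]
  rw [Finset.sum_comm]

lemma quad_sum (S : Finset ℕ) (A : ℕ → Fin d → ℝ) (lam : ℝ) (y : Fin d → ℝ) :
    y ⬝ᵥ (∑ s ∈ S, vecMulVec (A s) (A s) + lam • (1 : Matrix (Fin d) (Fin d) ℝ)) *ᵥ y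
      = (∑ s ∈ S, (A s ⬝ᵥ y)^2) + lam * (y ⬝ᵥ y) := by
  rw [Matrix.add_mulVec, dotProduct_add, sum_mat_mulVec]
  congr 1
  · rw [dot_sum_right]
    exact Finset.sum_congr rfl fun s _ => quad_vecMulVec (A s) y
  · rw [Matrix.smul_mulVec, Matrix.one_mulVec, dotProduct_smul, smul_eq_mul]

lemma trace_sum_vecMulVec (S : Finset ℕ) (A : ℕ → Fin d → ℝ) (lam : ℝ) :
    (∑ s ∈ S, vecMulVec (A s) (A s) + lam • (1 : Matrix (Fin d) (Fin d) ℝ)).trace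
      = (∑ s ∈ S, (A s ⬝ᵥ A s)) + lam * d := by
  have h1 : ∀ s : ℕ, (vecMulVec (A s) (A s)).trace = A s ⬝ᵥ A s := fun s => by
    rw [vecMulVec_eq Unit, Matrix.trace_replicateCol_mul_replicateRow]
  rw [Matrix.trace_add, Matrix.trace_sum, Matrix.trace_smul, Matrix.trace_one]
  simp only [h1, smul_eq_mul, Fintype.card_fin]

lemma posSemidef_vecMulVec (a : Fin d → ℝ) : (vecMulVec a a).PosSemidef := by
  rw [posSemidef_iff_dotProduct_mulVec]
  constructor
  · ext i j
    simp [conjTranspose, vecMulVec_apply, mul_comm]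
  · intro x
    rw [star_trivial, quad_vecMulVec]
    positivity

lemma posSemidef_sum_vecMulVec (s : Finset ℕ) (A : ℕ → Fin d → ℝ) :
    (∑ t ∈ s, vecMulVec (A t) (A t)).PosSemidef := by
  induction s using Finset.cons_induction with
  | empty => simpa using Matrix.PosSemidef.zero
  | cons a s ha ih =>
      rw [Finset.sum_cons]
      exact (posSemidef_vecMulVec (A a)).add ih

lemma block_bound (T l : ℕ) (hl : 1 ≤ l)
    (A : ℕ → (Fin d → ℝ)) (lam L : ℝ) (hlam : 0 < lam) (hd : 0 < d)
    (hA : ∀ t ∈ Icc 1 T, Real.sqrt (A t ⬝ᵥ A t) ≤ L)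
    (V : ℕ → Matrix (Fin d) (Fin d) ℝ)
    (hV : ∀ u, V u = ∑ s ∈ Icc (u - l + 1) u, vecMulVec (A s) (A s)
        + lam • (1 : Matrix (Fin d) (Fin d) ℝ))
    (τ m : ℕ) (hm : m ≤ l) (hsub : Icc (τ+1) (τ+m) ⊆ Icc 1 T) :
    ∑ t ∈ Icc (τ+1) (τ+m), min 1 (matNorm ((V (t-1))⁻¹) (A t) ^ 2)
      ≤ 2 * d * Real.log (1 + l * L^2 / (lam * d)) := by
  classical
  -- the block design matrices
  set W : ℕ → Matrix (Fin d) (Fin d) ℝ :=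
    fun j => ∑ s ∈ Icc (τ+1) (τ+j), vecMulVec (A s) (A s)
      + lam • (1 : Matrix (Fin d) (Fin d) ℝ) with hW
  have hWpd : ∀ j, (W j).PosDef := fun j =>
    Matrix.PosDef.posSemidef_add (posSemidef_sum_vecMulVec _ A) (posDef_smul_one hlam)
  have hVpd : ∀ u, (V u).PosDef := fun u => by
    rw [hV u]
    exact Matrix.PosDef.posSemidef_add (posSemidef_sum_vecMulVec _ A) (posDef_smul_one hlam)
  set q : ℕ → ℝ := fun j => A (τ+j+1) ⬝ᵥ (W j)⁻¹ *ᵥ A (τ+j+1) with hq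
  have hq_nonneg : ∀ j, 0 ≤ q j := fun j => by
    have := ((hWpd j).inv).posSemidef.dotProduct_mulVec_nonneg (A (τ+j+1))
    rwa [star_trivial] at this
  have hWsucc : ∀ j, W (j+1) = W j + vecMulVec (A (τ+j+1)) (A (τ+j+1)) := by
    intro j
    simp only [hW]
    rw [show τ + (j+1) = (τ+j) + 1 from by ring,
      Finset.sum_Icc_succ_top (by omega : τ + 1 ≤ τ + j + 1)]
    abel
  have hdet : ∀ j, (W (j+1)).det = (W j).det * (1 + q j) := fun j => by
    rw [hWsucc j, det_add_vecMulVec (hWpd j)]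
  -- pointwise comparison with the block matrices
  have hpt : ∀ j < m, min 1 (matNorm ((V (τ+j+1-1))⁻¹) (A (τ+j+1)) ^ 2)
      ≤ 2 * Real.log (1 + q j) := by
    intro j hj
    have hVq : 0 ≤ A (τ+j+1) ⬝ᵥ (V (τ+j))⁻¹ *ᵥ A (τ+j+1) := by
      have := ((hVpd (τ+j)).inv).posSemidef.dotProduct_mulVec_nonneg (A (τ+j+1))
      rwa [star_trivial] at this
    have hns : matNorm ((V (τ+j+1-1))⁻¹) (A (τ+j+1)) ^ 2
        = A (τ+j+1) ⬝ᵥ (V (τ+j))⁻¹ *ᵥ A (τ+j+1) := by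
      rw [show τ+j+1-1 = τ+j from by omega, matNorm, Real.sq_sqrt hVq]
    rw [hns]
    have hmono : A (τ+j+1) ⬝ᵥ (V (τ+j))⁻¹ *ᵥ A (τ+j+1) ≤ q j := by
      apply quad_inv_mono (hWpd j) (hVpd (τ+j))
      intro y
      rw [hV (τ+j), hW]
      rw [quad_sum, quad_sum]
      have hsubs : Icc (τ+1) (τ+j) ⊆ Icc (τ+j-l+1) (τ+j) := by
        apply Finset.Icc_subset_Icc_left; omega
      have := Finset.sum_le_sum_of_subset_of_nonneg hsubs
        (fun s _ _ => sq_nonneg (A s ⬝ᵥ y))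
      linarith
    calc min 1 (A (τ+j+1) ⬝ᵥ (V (τ+j))⁻¹ *ᵥ A (τ+j+1))
        ≤ min 1 (q j) := min_le_min le_rfl hmono
      _ ≤ 2 * Real.log (1 + q j) := min_le_two_log (hq_nonneg j)
  -- reindex the sum
  have hreindex : ∑ t ∈ Icc (τ+1) (τ+m), min 1 (matNorm ((V (t-1))⁻¹) (A t) ^ 2)
      = ∑ j ∈ range m, min 1 (matNorm ((V (τ+j+1-1))⁻¹) (A (τ+j+1)) ^ 2) := by
    rw [← Finset.Ico_add_one_right_eq_Icc, Finset.sum_Ico_eq_sum_range]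
    rw [show τ + m + 1 - (τ + 1) = m from by omega]
    exact Finset.sum_congr rfl fun j _ => by rw [show τ+1+j = τ+j+1 from by omega]
  -- telescoping
  have hlog : ∀ j, Real.log (1 + q j) = Real.log ((W (j+1)).det) - Real.log ((W j).det) := by
    intro j
    rw [hdet j, Real.log_mul (hWpd j).det_pos.ne' (by have := hq_nonneg j; linarith : (0:ℝ) < 1 + q j).ne']
    ring
  have htel : ∑ j ∈ range m, Real.log (1 + q j)
      = Real.log ((W m).det) - Real.log ((W 0).det) := by
    rw [Finset.sum_congr rfl fun j _ => hlog j]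
    exact Finset.sum_range_sub (fun j => Real.log ((W j).det)) m
  -- bound the trace
  have hL2 : ∀ s ∈ Icc (τ+1) (τ+m), A s ⬝ᵥ A s ≤ L^2 := by
    intro s hs
    have h1 := hA s (hsub hs)
    have h2 : 0 ≤ A s ⬝ᵥ A s := Finset.sum_nonneg fun i _ => mul_self_nonneg _
    nlinarith [Real.sq_sqrt h2, Real.sqrt_nonneg (A s ⬝ᵥ A s)]
  have htr : (W m).trace ≤ l * L^2 + lam * d := by
    rw [hW, trace_sum_vecMulVec]
    have h1 : ∑ s ∈ Icc (τ+1) (τ+m), A s ⬝ᵥ A s ≤ ∑ s ∈ Icc (τ+1) (τ+m), L^2 :=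
      Finset.sum_le_sum hL2
    have h2 : (∑ _s ∈ Icc (τ+1) (τ+m), L^2) = (m : ℝ) * L^2 := by
      rw [Finset.sum_const, Nat.card_Icc, show τ + m + 1 - (τ+1) = m from by omega,
        nsmul_eq_mul]
    have hL2nn : (0:ℝ) ≤ L^2 := sq_nonneg L
    have h3 : (m:ℝ) * L^2 ≤ (l:ℝ) * L^2 := by
      apply mul_le_mul_of_nonneg_right _ hL2nn
      exact_mod_cast hm
    linarith
  have htrnn : 0 ≤ (W m).trace := by
    rw [hW, trace_sum_vecMulVec]
    have : (0:ℝ) ≤ ∑ s ∈ Icc (τ+1) (τ+m), A s ⬝ᵥ A s :=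
      Finset.sum_nonneg fun s _ => Finset.sum_nonneg fun i _ => mul_self_nonneg _
    have : (0:ℝ) ≤ lam * d := by positivity
    linarith
  -- determinant bounds
  have hdpos : (0:ℝ) < d := by exact_mod_cast hd
  have hXpos : (0:ℝ) < (l * L^2 + lam * d) / d := by
    have hL2nn : (0:ℝ) ≤ L^2 := sq_nonneg L
    have : (0:ℝ) < lam * d := by positivity
    have hlnn : (0:ℝ) ≤ (l:ℝ) := by positivity
    apply div_pos _ hdpos
    nlinarith
  have hdetm : Real.log ((W m).det) ≤ d * Real.log ((l * L^2 + lam * d) / d) := by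
    have h1 : (W m).det ≤ ((W m).trace / d)^d := det_le_trace_div_pow hd (hWpd m)
    have h2 : ((W m).trace / d)^d ≤ ((l * L^2 + lam * d) / d)^d := by
      exact pow_le_pow_left₀ (div_nonneg htrnn hdpos.le) ((div_le_div_iff_of_pos_right hdpos).mpr htr) d
    have h3 := Real.log_le_log (hWpd m).det_pos (h1.trans h2)
    rwa [Real.log_pow] at h3
  have hdet0 : Real.log ((W 0).det) = d * Real.log lam := by
    have hW0 : W 0 = lam • (1 : Matrix (Fin d) (Fin d) ℝ) := by
      have he : Icc (τ+1) (τ+0) = (∅ : Finset ℕ) := Finset.Icc_eq_empty (by omega)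
      simp only [hW, he, Finset.sum_empty, zero_add]
    rw [hW0, Matrix.det_smul, Matrix.det_one, mul_one, Fintype.card_fin, Real.log_pow]
  have hfin : Real.log ((l * L^2 + lam * d) / d) - Real.log lam
      = Real.log (1 + l * L^2 / (lam * d)) := by
    rw [← Real.log_div hXpos.ne' hlam.ne']
    congr 1
    field_simp
    ring
  -- put everything together
  rw [hreindex]
  have hsum : ∑ j ∈ range m, min 1 (matNorm ((V (τ+j+1-1))⁻¹) (A (τ+j+1)) ^ 2)
      ≤ ∑ j ∈ range m, 2 * Real.log (1 + q j) :=
    Finset.sum_le_sum fun j hj => hpt j (Finset.mem_range.mp hj)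
  have h2sum : ∑ j ∈ range m, 2 * Real.log (1 + q j)
      = 2 * (Real.log ((W m).det) - Real.log ((W 0).det)) := by
    rw [← Finset.mul_sum, htel]
  have : Real.log ((W m).det) - Real.log ((W 0).det)
      ≤ d * Real.log (1 + l * L^2 / (lam * d)) := by
    rw [hdet0, ← hfin]
    have := hdetm
    ring_nf
    ring_nf at this
    linarith
  calc ∑ j ∈ range m, min 1 (matNorm ((V (τ+j+1-1))⁻¹) (A (τ+j+1)) ^ 2)
      ≤ ∑ j ∈ range m, 2 * Real.log (1 + q j) := hsum
    _ = 2 * (Real.log ((W m).det) - Real.log ((W 0).det)) := h2sum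
    _ ≤ 2 * (d * Real.log (1 + l * L^2 / (lam * d))) := by linarith
    _ = 2 * d * Real.log (1 + l * L^2 / (lam * d)) := by ring

end Helpers

/-- elliptical potential bound for the sliding-window design matrices. -/
theorem sum_min_one_norm_sq_sliding_window_le {d : ℕ} (T l : ℕ) (hl : 1 ≤ l)
    (A : ℕ → (Fin d → ℝ)) (lam L : ℝ) (hlam : 0 < lam)
    (hA : ∀ t ∈ Icc 1 T, Real.sqrt (A t ⬝ᵥ A t) ≤ L)
    (V : ℕ → Matrix (Fin d) (Fin d) ℝ)
    (hV : ∀ u, V u = ∑ s ∈ Icc (u - l + 1) u, vecMulVec (A s) (A s)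
        + lam • (1 : Matrix (Fin d) (Fin d) ℝ)) :
    (∑ t ∈ Icc 1 T, min 1 (matNorm ((V (t - 1))⁻¹) (A t) ^ 2))
      ≤ 2 * d * ⌈(T : ℝ) / l⌉₊ * Real.log (1 + l * L ^ 2 / (lam * d)) := by
  classical
  rcases Nat.eq_zero_or_pos d with hd | hd
  · subst hd
    simp [matNorm, dotProduct]
  set K := ⌈(T : ℝ) / l⌉₊ with hK
  have hl0 : 0 < l := hl
  have hKl : T ≤ K * l := by
    have h1 : (T : ℝ) / l ≤ K := Nat.le_ceil _
    have h2 : (0:ℝ) < l := by exact_mod_cast hl0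
    rw [div_le_iff₀ h2] at h1
    exact_mod_cast h1
  -- the blocks
  set B : ℕ → Finset ℕ := fun k => Icc (k*l+1) (min ((k+1)*l) T) with hB
  have hcover : Icc 1 T = (range K).biUnion B := by
    ext t
    simp only [Finset.mem_biUnion, Finset.mem_range, hB, mem_Icc, le_min_iff, min_le_iff]
    constructor
    · rintro ⟨h1, h2⟩
      refine ⟨(t-1)/l, ?_, ?_, ?_⟩
      · by_contra hc
        push_neg at hc
        have := Nat.mul_le_mul_right l hc
        have h3 : (t-1)/l * l ≤ t - 1 := Nat.div_mul_le_self _ _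
        omega
      · have h3 : (t-1)/l * l ≤ t - 1 := Nat.div_mul_le_self _ _
        omega
      · have h4 : t - 1 < ((t-1)/l + 1) * l :=
          (Nat.div_lt_iff_lt_mul hl0).mp (Nat.lt_succ_self _)
        omega
    · rintro ⟨k, hk, h1, h2⟩
      omega
  have hdisj : (↑(range K) : Set ℕ).PairwiseDisjoint B := by
    intro k hk k' hk' hne
    simp only [Finset.disjoint_left, hB]
    intro t ht ht'
    simp only [mem_Icc, le_min_iff, min_le_iff] at ht ht'
    rcases hne.lt_or_gt with h | h
    · have : (k+1) * l ≤ k' * l := Nat.mul_le_mul_right l h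
      omega
    · have : (k'+1) * l ≤ k * l := Nat.mul_le_mul_right l h
      omega
  rw [hcover, Finset.sum_biUnion hdisj]
  have hblock : ∀ k ∈ range K,
      ∑ t ∈ B k, min 1 (matNorm ((V (t - 1))⁻¹) (A t) ^ 2)
        ≤ 2 * d * Real.log (1 + l * L^2 / (lam * d)) := by
    intro k _
    set τ := k * l with hτ
    set u := min ((k+1)*l) T with hu
    have hul : u ≤ τ + l := by
      have : (k+1)*l = τ + l := by rw [hτ]; ring
      omega
    have huT : u ≤ T := min_le_right _ _
    set m := u - τ with hm'
    have hBk : B k = Icc (τ+1) (τ+m) := by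
      ext t
      simp only [hB, mem_Icc]
      omega
    rw [hBk]
    exact block_bound T l hl A lam L hlam hd hA V hV τ m (by omega)
      (fun t ht => by simp only [mem_Icc] at ht ⊢; omega)
  calc ∑ k ∈ range K, ∑ t ∈ B k, min 1 (matNorm ((V (t - 1))⁻¹) (A t) ^ 2)
      ≤ ∑ _k ∈ range K, 2 * d * Real.log (1 + l * L^2 / (lam * d)) :=
        Finset.sum_le_sum hblock
    _ = K * (2 * d * Real.log (1 + l * L^2 / (lam * d))) := by
        rw [Finset.sum_const, Finset.card_range, nsmul_eq_mul]
    _ = 2 * d * K * Real.log (1 + l * L^2 / (lam * d)) := by ring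
end
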